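/- Let A be a DG Poisson Hopf algebra with bracket of degree 0 and antipode S. Then S({a,b}) = (-1)^{|a||b|}{S(b), S(a)} = -{S(a), S(b)} for all homogeneous a, b ∈ A, i.e., the antipode is a graded Poisson anti-homomorphism. -/

import Mathlib

open TensorProduct

namespace DGPH

variable {k : Type} [Field k]

/-- The `n`-th graded piece of the induced grading on a tensor product of graded modules. -/
def tgrade {M N : Type} [AddCommGroup M] [Module k M] [AddCommGroup N] [Module k N]
    (𝒜 : ℤ → Submodule k M) (ℬ : ℤ → Submodule k N) (n : ℤ) : Submodule k (M ⊗[k] N) :=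
  ⨆ ij : {q : ℤ × ℤ // q.1 + q.2 = n},
    Submodule.span k
      (Set.image2 (fun a b => a ⊗ₜ[k] b) ((𝒜 ij.1.1 : Set M)) ((ℬ ij.1.2 : Set N)))

/-- Characterization of the Koszul-signed multiplication on a tensor product:
`(a ⊗ b)(a' ⊗ b') = (-1)^{|a'||b|} (a a') ⊗ (b b')`. -/
def KoszulMulChar {M N : Type} [AddCommGroup M] [Module k M] [AddCommGroup N] [Module k N]
    (𝒜 : ℤ → Submodule k M) (ℬ : ℤ → Submodule k N)
    (mulM : M →ₗ[k] M →ₗ[k] M) (mulN : N →ₗ[k] N →ₗ[k] N)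
    (μ : (M ⊗[k] N) →ₗ[k] (M ⊗[k] N) →ₗ[k] (M ⊗[k] N)) : Prop :=
  ∀ ⦃i j : ℤ⦄ (a : M) ⦃a' : M⦄ ⦃b : N⦄ (b' : N), a' ∈ 𝒜 i → b ∈ ℬ j →
    μ (a ⊗ₜ[k] b) (a' ⊗ₜ[k] b') = ((-1 : k) ^ (i * j)) • ((mulM a a') ⊗ₜ[k] (mulN b b'))

/-- Characterization of the Koszul-signed Poisson bracket of degree `p` on a tensor product:
`{a⊗b, a'⊗b'} = (-1)^{(|a'|+p)|b|} {a,a'} ⊗ (bb') + (-1)^{(|b|+p)|a'|} (aa') ⊗ {b,b'}`. -/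
def KoszulBracketChar {M N : Type} [AddCommGroup M] [Module k M] [AddCommGroup N] [Module k N]
    (𝒜 : ℤ → Submodule k M) (ℬ : ℤ → Submodule k N)
    (mulM : M →ₗ[k] M →ₗ[k] M) (mulN : N →ₗ[k] N →ₗ[k] N)
    (brM : M →ₗ[k] M →ₗ[k] M) (brN : N →ₗ[k] N →ₗ[k] N) (p : ℤ)
    (β : (M ⊗[k] N) →ₗ[k] (M ⊗[k] N) →ₗ[k] (M ⊗[k] N)) : Prop :=
  ∀ ⦃i j : ℤ⦄ (a : M) ⦃a' : M⦄ ⦃b : N⦄ (b' : N), a' ∈ 𝒜 i → b ∈ ℬ j →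
    β (a ⊗ₜ[k] b) (a' ⊗ₜ[k] b') =
      ((-1 : k) ^ ((i + p) * j)) • ((brM a a') ⊗ₜ[k] (mulN b b')) +
      ((-1 : k) ^ ((j + p) * i)) • ((mulM a a') ⊗ₜ[k] (brN b b'))

/-- Characterization of the Koszul-signed differential on a tensor product:
`d(a ⊗ b) = d a ⊗ b + (-1)^{|a|} a ⊗ d b`. -/
def KoszulDiffChar {M N : Type} [AddCommGroup M] [Module k M] [AddCommGroup N] [Module k N]
    (𝒜 : ℤ → Submodule k M) (dM : M →ₗ[k] M) (dN : N →ₗ[k] N)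
    (D : M ⊗[k] N →ₗ[k] M ⊗[k] N) : Prop :=
  ∀ ⦃i : ℤ⦄ ⦃a : M⦄ (b : N), a ∈ 𝒜 i →
    D (a ⊗ₜ[k] b) = (dM a) ⊗ₜ[k] b + ((-1 : k) ^ i) • (a ⊗ₜ[k] (dN b))

/-- Characterization of the Koszul twist `T(a ⊗ b) = (-1)^{|a||b|} b ⊗ a`. -/
def KoszulTwistChar {M N : Type} [AddCommGroup M] [Module k M] [AddCommGroup N] [Module k N]
    (𝒜 : ℤ → Submodule k M) (ℬ : ℤ → Submodule k N)
    (T : M ⊗[k] N →ₗ[k] N ⊗[k] M) : Prop :=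
  ∀ ⦃i j : ℤ⦄ ⦃a : M⦄ ⦃b : N⦄, a ∈ 𝒜 i → b ∈ ℬ j →
    T (a ⊗ₜ[k] b) = ((-1 : k) ^ (i * j)) • (b ⊗ₜ[k] a)

section Structures

variable (k)
variable (M : Type) [AddCommGroup M] [Module k M]

/-- A `ℤ`-graded associative unital algebra, given by unbundled data. -/
structure IsGradedAlgebra (𝒜 : ℤ → Submodule k M) (mul : M →ₗ[k] M →ₗ[k] M) (one : M) :
    Prop where
  indep : iSupIndep 𝒜
  total : (⨆ i, 𝒜 i) = ⊤
  mul_mem : ∀ ⦃i j : ℤ⦄ ⦃a b : M⦄, a ∈ 𝒜 i → b ∈ 𝒜 j → mul a b ∈ 𝒜 (i + j)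
  one_mem : one ∈ 𝒜 0
  mul_assoc : ∀ a b c : M, mul (mul a b) c = mul a (mul b c)
  one_mul : ∀ a : M, mul one a = a
  mul_one : ∀ a : M, mul a one = a

/-- A differential graded algebra. -/
structure IsDGAlgebra (𝒜 : ℤ → Submodule k M) (mul : M →ₗ[k] M →ₗ[k] M) (one : M)
    (d : M →ₗ[k] M) extends IsGradedAlgebra k M 𝒜 mul one : Prop where
  d_mem : ∀ ⦃i : ℤ⦄ ⦃a : M⦄, a ∈ 𝒜 i → d a ∈ 𝒜 (i + 1)
  d_sq : ∀ a : M, d (d a) = 0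
  d_mul : ∀ ⦃i : ℤ⦄ ⦃a : M⦄ (b : M), a ∈ 𝒜 i →
    d (mul a b) = mul (d a) b + ((-1 : k) ^ i) • mul a (d b)

/-- A differential graded Poisson algebra with Poisson bracket of degree `p`. -/
structure IsDGPoisson (𝒜 : ℤ → Submodule k M) (mul : M →ₗ[k] M →ₗ[k] M) (one : M)
    (bracket : M →ₗ[k] M →ₗ[k] M) (d : M →ₗ[k] M) (p : ℤ)
    extends IsDGAlgebra k M 𝒜 mul one d : Prop where
  gcomm : ∀ ⦃i j : ℤ⦄ ⦃a b : M⦄, a ∈ 𝒜 i → b ∈ 𝒜 j →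
    mul a b = ((-1 : k) ^ (i * j)) • mul b a
  bracket_mem : ∀ ⦃i j : ℤ⦄ ⦃a b : M⦄, a ∈ 𝒜 i → b ∈ 𝒜 j → bracket a b ∈ 𝒜 (i + j + p)
  bracket_antisymm : ∀ ⦃i j : ℤ⦄ ⦃a b : M⦄, a ∈ 𝒜 i → b ∈ 𝒜 j →
    bracket a b = -(((-1 : k) ^ ((i + p) * (j + p))) • bracket b a)
  bracket_jacobi : ∀ ⦃i j : ℤ⦄ ⦃a b : M⦄ (c : M), a ∈ 𝒜 i → b ∈ 𝒜 j →
    bracket a (bracket b c) =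
      bracket (bracket a b) c + ((-1 : k) ^ ((i + p) * (j + p))) • bracket b (bracket a c)
  bracket_leibniz : ∀ ⦃i j : ℤ⦄ ⦃a b : M⦄ (c : M), a ∈ 𝒜 i → b ∈ 𝒜 j →
    bracket a (mul b c) =
      mul (bracket a b) c + ((-1 : k) ^ ((i + p) * j)) • mul b (bracket a c)
  d_bracket : ∀ ⦃i : ℤ⦄ ⦃a : M⦄ (b : M), a ∈ 𝒜 i →
    d (bracket a b) = bracket (d a) b + ((-1 : k) ^ (i + p)) • bracket a (d b)

/-- A `ℤ`-graded coalgebra, given by unbundled data. -/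
structure IsGradedCoalgebra (𝒜 : ℤ → Submodule k M) (comul : M →ₗ[k] M ⊗[k] M)
    (counit : M →ₗ[k] k) : Prop where
  comul_mem : ∀ ⦃i : ℤ⦄ ⦃a : M⦄, a ∈ 𝒜 i → comul a ∈ tgrade 𝒜 𝒜 i
  counit_zero : ∀ ⦃i : ℤ⦄ ⦃a : M⦄, a ∈ 𝒜 i → i ≠ 0 → counit a = 0
  coassoc : ∀ a : M,
    (TensorProduct.assoc k M M M) ((TensorProduct.map comul LinearMap.id) (comul a)) =
      (TensorProduct.map LinearMap.id comul) (comul a)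
  counit_comul_left : ∀ a : M,
    (TensorProduct.lid k M) ((TensorProduct.map counit LinearMap.id) (comul a)) = a
  counit_comul_right : ∀ a : M,
    (TensorProduct.rid k M) ((TensorProduct.map LinearMap.id counit) (comul a)) = a

/-- A `ℤ`-graded bialgebra (comultiplication is an algebra map for the Koszul-signed
multiplication on the tensor square). -/
structure IsGradedBialgebra (𝒜 : ℤ → Submodule k M) (mul : M →ₗ[k] M →ₗ[k] M) (one : M)
    (comul : M →ₗ[k] M ⊗[k] M) (counit : M →ₗ[k] k) : Prop where
  alg : IsGradedAlgebra k M 𝒜 mul one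
  coalg : IsGradedCoalgebra k M 𝒜 comul counit
  comul_one : comul one = one ⊗ₜ[k] one
  counit_one : counit one = 1
  counit_mul : ∀ a b : M, counit (mul a b) = counit a * counit b
  comul_mul : ∃ mul₂ : (M ⊗[k] M) →ₗ[k] (M ⊗[k] M) →ₗ[k] (M ⊗[k] M),
    KoszulMulChar 𝒜 𝒜 mul mul mul₂ ∧
      ∀ a b : M, comul (mul a b) = mul₂ (comul a) (comul b)

/-- A `ℤ`-graded Hopf algebra. -/
structure IsGradedHopf (𝒜 : ℤ → Submodule k M) (mul : M →ₗ[k] M →ₗ[k] M) (one : M)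
    (comul : M →ₗ[k] M ⊗[k] M) (counit : M →ₗ[k] k) (S : M →ₗ[k] M) : Prop where
  bialg : IsGradedBialgebra k M 𝒜 mul one comul counit
  antipode_mem : ∀ ⦃i : ℤ⦄ ⦃a : M⦄, a ∈ 𝒜 i → S a ∈ 𝒜 i
  antipode_left : ∀ a : M,
    TensorProduct.lift mul ((TensorProduct.map S LinearMap.id) (comul a)) = counit a • one
  antipode_right : ∀ a : M,
    TensorProduct.lift mul ((TensorProduct.map LinearMap.id S) (comul a)) = counit a • one

/-- `d` is a coderivation (with Koszul signs) and `ε ∘ d = 0`. -/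
def CoderivationProp (𝒜 : ℤ → Submodule k M) (comul : M →ₗ[k] M ⊗[k] M)
    (counit : M →ₗ[k] k) (d : M →ₗ[k] M) : Prop :=
  (∀ a : M, counit (d a) = 0) ∧
  ∃ D : M ⊗[k] M →ₗ[k] M ⊗[k] M, KoszulDiffChar 𝒜 d d D ∧
    ∀ a : M, comul (d a) = D (comul a)

/-- A differential graded bialgebra. -/
structure IsDGBialgebra (𝒜 : ℤ → Submodule k M) (mul : M →ₗ[k] M →ₗ[k] M) (one : M)
    (comul : M →ₗ[k] M ⊗[k] M) (counit : M →ₗ[k] k) (d : M →ₗ[k] M) : Prop where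
  bialg : IsGradedBialgebra k M 𝒜 mul one comul counit
  dga : IsDGAlgebra k M 𝒜 mul one d
  coderiv : CoderivationProp k M 𝒜 comul counit d

/-- A differential graded Hopf algebra. -/
structure IsDGHopf (𝒜 : ℤ → Submodule k M) (mul : M →ₗ[k] M →ₗ[k] M) (one : M)
    (comul : M →ₗ[k] M ⊗[k] M) (counit : M →ₗ[k] k) (d : M →ₗ[k] M) (S : M →ₗ[k] M) :
    Prop where
  dgbialg : IsDGBialgebra k M 𝒜 mul one comul counit d
  antipode_mem : ∀ ⦃i : ℤ⦄ ⦃a : M⦄, a ∈ 𝒜 i → S a ∈ 𝒜 i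
  antipode_left : ∀ a : M,
    TensorProduct.lift mul ((TensorProduct.map S LinearMap.id) (comul a)) = counit a • one
  antipode_right : ∀ a : M,
    TensorProduct.lift mul ((TensorProduct.map LinearMap.id S) (comul a)) = counit a • one

/-- A differential graded Poisson bialgebra (bracket of degree 0). -/
structure IsDGPoissonBialgebra (𝒜 : ℤ → Submodule k M) (mul : M →ₗ[k] M →ₗ[k] M) (one : M)
    (bracket : M →ₗ[k] M →ₗ[k] M) (d : M →ₗ[k] M)
    (comul : M →ₗ[k] M ⊗[k] M) (counit : M →ₗ[k] k) : Prop where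
  poisson : IsDGPoisson k M 𝒜 mul one bracket d 0
  dgbialg : IsDGBialgebra k M 𝒜 mul one comul counit d
  comul_bracket : ∃ br₂ : (M ⊗[k] M) →ₗ[k] (M ⊗[k] M) →ₗ[k] (M ⊗[k] M),
    KoszulBracketChar 𝒜 𝒜 mul mul bracket bracket 0 br₂ ∧
      ∀ a b : M, comul (bracket a b) = br₂ (comul a) (comul b)

/-- A differential graded Poisson Hopf algebra (bracket of degree 0). -/
structure IsDGPoissonHopf (𝒜 : ℤ → Submodule k M) (mul : M →ₗ[k] M →ₗ[k] M) (one : M)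
    (bracket : M →ₗ[k] M →ₗ[k] M) (d : M →ₗ[k] M)
    (comul : M →ₗ[k] M ⊗[k] M) (counit : M →ₗ[k] k) (S : M →ₗ[k] M) : Prop where
  toPoissonBialg : IsDGPoissonBialgebra k M 𝒜 mul one bracket d comul counit
  antipode_mem : ∀ ⦃i : ℤ⦄ ⦃a : M⦄, a ∈ 𝒜 i → S a ∈ 𝒜 i
  antipode_left : ∀ a : M,
    TensorProduct.lift mul ((TensorProduct.map S LinearMap.id) (comul a)) = counit a • one
  antipode_right : ∀ a : M,
    TensorProduct.lift mul ((TensorProduct.map LinearMap.id S) (comul a)) = counit a • one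

end Structures

/-- A homomorphism of differential graded algebras (unbundled data). -/
structure IsDGAlgHom {M N : Type} [AddCommGroup M] [Module k M] [AddCommGroup N] [Module k N]
    (𝒜 : ℤ → Submodule k M) (mulM : M →ₗ[k] M →ₗ[k] M) (oneM : M) (dM : M →ₗ[k] M)
    (ℬ : ℤ → Submodule k N) (mulN : N →ₗ[k] N →ₗ[k] N) (oneN : N) (dN : N →ₗ[k] N)
    (f : M →ₗ[k] N) : Prop where
  map_mem : ∀ ⦃i : ℤ⦄ ⦃a : M⦄, a ∈ 𝒜 i → f a ∈ ℬ i
  map_one : f oneM = oneN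
  map_mul : ∀ a b : M, f (mulM a b) = mulN (f a) (f b)
  map_d : ∀ a : M, f (dM a) = dN (f a)

/-- A homomorphism of differential graded Poisson algebras. -/
structure IsDGPoissonHom {M N : Type} [AddCommGroup M] [Module k M] [AddCommGroup N] [Module k N]
    (𝒜 : ℤ → Submodule k M) (mulM : M →ₗ[k] M →ₗ[k] M) (oneM : M)
    (brM : M →ₗ[k] M →ₗ[k] M) (dM : M →ₗ[k] M)
    (ℬ : ℤ → Submodule k N) (mulN : N →ₗ[k] N →ₗ[k] N) (oneN : N)
    (brN : N →ₗ[k] N →ₗ[k] N) (dN : N →ₗ[k] N)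
    (f : M →ₗ[k] N)
    extends IsDGAlgHom 𝒜 mulM oneM dM ℬ mulN oneN dN f : Prop where
  map_bracket : ∀ a b : M, f (brM a b) = brN (f a) (f b)

/-- `(E, m, h)` is the universal enveloping algebra of the DG Poisson algebra
`(A, 𝒜, mulA, oneA, brA, dA)` with bracket of degree `p`. -/
structure IsUEA {A E : Type} [AddCommGroup A] [Module k A] [AddCommGroup E] [Module k E]
    (𝒜 : ℤ → Submodule k A) (mulA : A →ₗ[k] A →ₗ[k] A) (oneA : A)
    (brA : A →ₗ[k] A →ₗ[k] A) (dA : A →ₗ[k] A) (p : ℤ)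
    (ℰ : ℤ → Submodule k E) (mulE : E →ₗ[k] E →ₗ[k] E) (oneE : E) (dE : E →ₗ[k] E)
    (m h : A →ₗ[k] E) : Prop where
  dga : IsDGAlgebra k E ℰ mulE oneE dE
  m_hom : IsDGAlgHom 𝒜 mulA oneA dA ℰ mulE oneE dE m
  h_mem : ∀ ⦃i : ℤ⦄ ⦃a : A⦄, a ∈ 𝒜 i → h a ∈ ℰ (i + p)
  h_d : ∀ a : A, h (dA a) = dE (h a)
  h_lie : ∀ ⦃i j : ℤ⦄ ⦃a b : A⦄, a ∈ 𝒜 i → b ∈ 𝒜 j →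
    h (brA a b) = mulE (h a) (h b) - ((-1 : k) ^ ((i + p) * (j + p))) • mulE (h b) (h a)
  m_bracket : ∀ ⦃i j : ℤ⦄ ⦃a b : A⦄, a ∈ 𝒜 i → b ∈ 𝒜 j →
    m (brA a b) = mulE (h a) (m b) - ((-1 : k) ^ ((i + p) * j)) • mulE (m b) (h a)
  h_mul : ∀ ⦃i j : ℤ⦄ ⦃a b : A⦄, a ∈ 𝒜 i → b ∈ 𝒜 j →
    h (mulA a b) = mulE (m a) (h b) + ((-1 : k) ^ (i * j)) • mulE (m b) (h a)
  universal : ∀ (D : Type) [AddCommGroup D] [Module k D]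
    (𝒟 : ℤ → Submodule k D) (mulD : D →ₗ[k] D →ₗ[k] D) (oneD : D) (dD : D →ₗ[k] D)
    (f g : A →ₗ[k] D),
    IsDGAlgebra k D 𝒟 mulD oneD dD →
    IsDGAlgHom 𝒜 mulA oneA dA 𝒟 mulD oneD dD f →
    (∀ ⦃i : ℤ⦄ ⦃a : A⦄, a ∈ 𝒜 i → g a ∈ 𝒟 (i + p)) →
    (∀ a : A, g (dA a) = dD (g a)) →
    (∀ ⦃i j : ℤ⦄ ⦃a b : A⦄, a ∈ 𝒜 i → b ∈ 𝒜 j →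
      g (brA a b) = mulD (g a) (g b) - ((-1 : k) ^ ((i + p) * (j + p))) • mulD (g b) (g a)) →
    (∀ ⦃i j : ℤ⦄ ⦃a b : A⦄, a ∈ 𝒜 i → b ∈ 𝒜 j →
      f (brA a b) = mulD (g a) (f b) - ((-1 : k) ^ ((i + p) * j)) • mulD (f b) (g a)) →
    (∀ ⦃i j : ℤ⦄ ⦃a b : A⦄, a ∈ 𝒜 i → b ∈ 𝒜 j →
      g (mulA a b) = mulD (f a) (g b) + ((-1 : k) ^ (i * j)) • mulD (f b) (g a)) →
    ∃! φ : E →ₗ[k] D, IsDGAlgHom ℰ mulE oneE dE 𝒟 mulD oneD dD φ ∧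
      φ ∘ₗ m = f ∧ φ ∘ₗ h = g

end DGPH

/-!
The argument is convolution algebra in `Hom(A ⊗ A, A)`, where `A ⊗ A` carries the Koszul-signed
coproduct `(a ⊗ b) ↦ ∑ ± (a₁ ⊗ b₁) ⊗ (a₂ ⊗ b₂)`, so that the bialgebra axioms say that `Δ` is
multiplicative. Write `⋆` for convolution, `m`, `β : A ⊗ A → A` for the product and the bracket,
and `e` for the unit `a ⊗ b ↦ ε(a) ε(b) 1`.

* `(S ∘ m) ⋆ m = e` and `m ⋆ (S ∘ m) = e`, because `Δ ∘ m = (m ⊗ m) ∘ Δ_{A ⊗ A}`; with graded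
  commutativity also `(m ∘ (S ⊗ S)) ⋆ m = e`, hence `S ∘ m = m ∘ (S ⊗ S)`.
* Applying `m ∘ (id ⊗ S)` to `Δ{a, b} = ∑ ± {a₁, b₁} ⊗ a₂b₂ ± a₁b₁ ⊗ {a₂, b₂}` and using
  `ε{a, b} = 0` gives `m ⋆ (S ∘ β) = -(β ⋆ (S ∘ m))`.
* Bracketing `∑ a₁ S(a₂) = ε(a) 1` with a fixed element and expanding by the Leibniz rule turns
  `β ⋆ (S ∘ m)` into `m ⋆ (β ∘ (S ⊗ S))`.

Hence `S ∘ β = (S ∘ m) ⋆ m ⋆ (S ∘ β) = -((S ∘ m) ⋆ m ⋆ (β ∘ (S ⊗ S))) = -(β ∘ (S ⊗ S))`.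
-/

namespace DGPH

variable {k : Type} [Field k]

theorem neg_one_zpow_mul_neg_one_zpow (m n : ℤ) :
    (-1 : k) ^ m * (-1 : k) ^ n = (-1 : k) ^ (m + n) :=
  (zpow_add₀ (by norm_num) m n).symm

theorem neg_one_zpow_eq_of_even_sub {m n : ℤ} (h : Even (m - n)) : (-1 : k) ^ m = (-1 : k) ^ n := by
  rw [← sub_add_cancel m n, zpow_add₀ (by norm_num), h.neg_one_zpow, one_mul]

section Convolution

variable {C B : Type} [AddCommGroup C] [Module k C] [AddCommGroup B] [Module k B]

def conv (μ : B →ₗ[k] B →ₗ[k] B) (δ : C →ₗ[k] C ⊗[k] C) (f g : C →ₗ[k] B) : C →ₗ[k] B :=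
  lift μ ∘ₗ map f g ∘ₗ δ

variable (μ : B →ₗ[k] B →ₗ[k] B) (δ : C →ₗ[k] C ⊗[k] C)

theorem conv_assoc (hμ : ∀ a b c, μ (μ a b) c = μ a (μ b c))
    (hδ : ∀ c, TensorProduct.assoc k C C C (map δ LinearMap.id (δ c)) = map LinearMap.id δ (δ c))
    (f g h : C →ₗ[k] B) : conv μ δ (conv μ δ f g) h = conv μ δ f (conv μ δ g h) := by
  have hμ' : lift μ ∘ₗ map (lift μ ∘ₗ map f g) h =
      lift μ ∘ₗ map f (lift μ ∘ₗ map g h) ∘ₗ (TensorProduct.assoc k C C C).toLinearMap :=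
    ext_threefold fun x y z => by simp [hμ]
  ext c
  calc conv μ δ (conv μ δ f g) h c
      = (lift μ ∘ₗ map (lift μ ∘ₗ map f g) h) (map δ LinearMap.id (δ c)) := by
        simp only [conv, LinearMap.comp_apply, map_map, LinearMap.comp_id]; rfl
    _ = lift μ (map f (lift μ ∘ₗ map g h) (map LinearMap.id δ (δ c))) := by
        rw [hμ', LinearMap.comp_apply, LinearMap.comp_apply, LinearEquiv.coe_coe, hδ]
    _ = conv μ δ f (conv μ δ g h) c := by
        simp only [conv, LinearMap.comp_apply, map_map, LinearMap.comp_id]; rfl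

theorem one_conv {one : B} {ε : C →ₗ[k] k} (hone : ∀ b, μ one b = b)
    (hε : ∀ c, TensorProduct.lid k C (map ε LinearMap.id (δ c)) = c) (f : C →ₗ[k] B) :
    conv μ δ (LinearMap.toSpanSingleton k B one ∘ₗ ε) f = f := by
  have key : lift μ ∘ₗ map (LinearMap.toSpanSingleton k B one ∘ₗ ε) f =
      f ∘ₗ (TensorProduct.lid k C).toLinearMap ∘ₗ map ε LinearMap.id :=
    TensorProduct.ext' fun x y => by simp [hone]
  ext c
  rw [conv, ← LinearMap.comp_assoc, key]
  simp [hε]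

theorem conv_one {one : B} {ε : C →ₗ[k] k} (hone : ∀ b, μ b one = b)
    (hε : ∀ c, TensorProduct.rid k C (map LinearMap.id ε (δ c)) = c) (f : C →ₗ[k] B) :
    conv μ δ f (LinearMap.toSpanSingleton k B one ∘ₗ ε) = f := by
  have key : lift μ ∘ₗ map f (LinearMap.toSpanSingleton k B one ∘ₗ ε) =
      f ∘ₗ (TensorProduct.rid k C).toLinearMap ∘ₗ map LinearMap.id ε :=
    TensorProduct.ext' fun x y => by simp [hone]
  ext c
  rw [conv, ← LinearMap.comp_assoc, key]
  simp [hε]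

theorem conv_neg_right (f g : C →ₗ[k] B) : conv μ δ f (-g) = -conv μ δ f g := by
  have : map f (-g) = -map f g := TensorProduct.ext' fun x y => by simp [tmul_neg]
  simp [conv, this]

theorem conv_add_conv (f g f' g' : C →ₗ[k] B) :
    conv μ δ f g + conv μ δ f' g' = lift μ ∘ₗ (map f g + map f' g') ∘ₗ δ := by
  simp [conv, LinearMap.comp_add, LinearMap.add_comp]

end Convolution

section KoszulInterchange

variable {M N P Q M' N' P' Q' : Type} [AddCommGroup M] [Module k M] [AddCommGroup N] [Module k N]
  [AddCommGroup P] [Module k P] [AddCommGroup Q] [Module k Q]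
  [AddCommGroup M'] [Module k M'] [AddCommGroup N'] [Module k N']
  [AddCommGroup P'] [Module k P'] [AddCommGroup Q'] [Module k Q']

def HasParity (π : M →ₗ[k] M) (i : ℤ) (x : M) : Prop := π x = if Odd i then x else 0

def tensorOddProj (πM : M →ₗ[k] M) (πN : N →ₗ[k] N) : M ⊗[k] N →ₗ[k] M ⊗[k] N :=
  map πM (LinearMap.id - πN) + map (LinearMap.id - πM) πN

theorem HasParity.tmul {πM : M →ₗ[k] M} {πN : N →ₗ[k] N} {i j : ℤ} {m : M} {n : N}
    (hm : HasParity πM i m) (hn : HasParity πN j n) :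
    HasParity (tensorOddProj πM πN) (i + j) (m ⊗ₜ[k] n) := by
  have hij : Odd (i + j) ↔ (Odd i ↔ ¬Odd j) := by rw [Int.odd_add, Int.not_odd_iff_even]
  unfold HasParity at *
  by_cases hi : Odd i <;> by_cases hj : Odd j <;> simp [tensorOddProj, hm, hn, hi, hj, hij]

/-- With `πN`, `πP` the projections onto the odd parts, this is the Koszul interchange
`(m ⊗ n) ⊗ (p ⊗ q) ↦ (-1)^{|n||p|} (m ⊗ p) ⊗ (n ⊗ q)`, written through
`(-1)^{|n||p|} = 1 - 2 [n odd] [p odd]` so that no splitting into degrees is needed. -/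
def koszulInterchange (πN : N →ₗ[k] N) (πP : P →ₗ[k] P) :
    (M ⊗[k] N) ⊗[k] (P ⊗[k] Q) →ₗ[k] (M ⊗[k] P) ⊗[k] (N ⊗[k] Q) :=
  (tensorTensorTensorComm k M N P Q).toLinearMap ∘ₗ
    (LinearMap.id - (2 : k) • map (LinearMap.lTensor M πN) (LinearMap.rTensor Q πP))

theorem koszulInterchange_tmul (πN : N →ₗ[k] N) (πP : P →ₗ[k] P) (m : M) (n : N) (p : P) (q : Q) :
    koszulInterchange πN πP ((m ⊗ₜ[k] n) ⊗ₜ[k] (p ⊗ₜ[k] q)) =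
      (m ⊗ₜ[k] p) ⊗ₜ[k] (n ⊗ₜ[k] q) - (2 : k) • (m ⊗ₜ[k] πP p) ⊗ₜ[k] (πN n ⊗ₜ[k] q) := by
  simp [koszulInterchange]

theorem koszulInterchange_tmul_of_parity {πN : N →ₗ[k] N} {πP : P →ₗ[k] P} {i j : ℤ}
    (m : M) {n : N} {p : P} (q : Q) (hn : HasParity πN i n) (hp : HasParity πP j p) :
    koszulInterchange πN πP ((m ⊗ₜ[k] n) ⊗ₜ[k] (p ⊗ₜ[k] q)) =
      ((-1 : k) ^ (i * j)) • (m ⊗ₜ[k] p) ⊗ₜ[k] (n ⊗ₜ[k] q) := by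
  unfold HasParity at hn hp
  rw [koszulInterchange_tmul, hn, hp]
  rcases Int.even_or_odd i with hi | hi <;> rcases Int.even_or_odd j with hj | hj
  · simp [Int.not_odd_iff_even.mpr hi, Int.not_odd_iff_even.mpr hj, (hi.mul_right j).neg_one_zpow]
  · simp [Int.not_odd_iff_even.mpr hi, hj, (hi.mul_right j).neg_one_zpow]
  · simp [Int.not_odd_iff_even.mpr hj, hi, (hj.mul_left i).neg_one_zpow]
  · rw [if_pos hi, if_pos hj, (hi.mul hj).neg_one_zpow]
    module

theorem koszulInterchange_comp_map {πN : N →ₗ[k] N} {πP : P →ₗ[k] P}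
    {πN' : N' →ₗ[k] N'} {πP' : P' →ₗ[k] P'}
    (f : M →ₗ[k] M') {g : N →ₗ[k] N'} {h : P →ₗ[k] P'} (l : Q →ₗ[k] Q')
    (hg : g ∘ₗ πN = πN' ∘ₗ g) (hh : h ∘ₗ πP = πP' ∘ₗ h) :
    koszulInterchange πN' πP' ∘ₗ map (map f g) (map h l) =
      map (map f h) (map g l) ∘ₗ koszulInterchange πN πP := by
  have hg' (n : N) : g (πN n) = πN' (g n) := LinearMap.congr_fun hg n
  have hh' (p : P) : h (πP p) = πP' (h p) := LinearMap.congr_fun hh p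
  apply ext_fourfold'
  intro m n p q
  simp [koszulInterchange_tmul, hg', hh']

end KoszulInterchange

section Graded

variable {M N V : Type} [AddCommGroup M] [Module k M] [AddCommGroup N] [Module k N]
  [AddCommGroup V] [Module k V]

theorem span_image2_tmul_eq_top {s : Set M} {t : Set N} (hs : Submodule.span k s = ⊤)
    (ht : Submodule.span k t = ⊤) : Submodule.span k (Set.image2 (· ⊗ₜ[k] ·) s t) = ⊤ := by
  have := Submodule.map₂_span_span k (TensorProduct.mk k M N) s t
  simp only [mk_apply] at this
  rw [← this, hs, ht, map₂_mk_top_top_eq_top]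

theorem ext_on_tmul {s : Set M} {t : Set N} (hs : Submodule.span k s = ⊤)
    (ht : Submodule.span k t = ⊤) {f g : M ⊗[k] N →ₗ[k] V}
    (h : ∀ x ∈ s, ∀ y ∈ t, f (x ⊗ₜ y) = g (x ⊗ₜ y)) : f = g :=
  LinearMap.ext_on (span_image2_tmul_eq_top hs ht) fun _ ⟨x, hx, y, hy, hxy⟩ => hxy ▸ h x hx y hy

theorem exists_sum_tmul_of_mem_tgrade {A : Type} [AddCommGroup A] [Module k A]
    {𝒜 : ℤ → Submodule k A} {n : ℤ} {z : A ⊗[k] A} (hz : z ∈ tgrade 𝒜 𝒜 n) :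
    ∃ (m : ℕ) (p : Fin m → ℤ) (x y : Fin m → A), (∀ s, x s ∈ 𝒜 (p s)) ∧
      (∀ s, y s ∈ 𝒜 (n - p s)) ∧ z = ∑ s, x s ⊗ₜ y s := by
  have hspan : tgrade 𝒜 𝒜 n ≤ Submodule.span k
      {w | ∃ p a b, a ∈ 𝒜 p ∧ b ∈ 𝒜 (n - p) ∧ w = a ⊗ₜ[k] b} :=
    iSup_le fun ij => Submodule.span_mono <| by
      rintro _ ⟨a, ha, b, hb, rfl⟩
      exact ⟨ij.1.1, a, b, ha, by rwa [show n - ij.1.1 = ij.1.2 by have := ij.2; omega], rfl⟩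
  obtain ⟨m, c, g, hg⟩ := Submodule.mem_span_set'.mp (hspan hz)
  choose p a b ha hb hab using fun s => (g s).2
  exact ⟨m, p, fun s => c s • a s, b, fun s => Submodule.smul_mem _ _ (ha s), hb,
    by rw [← hg]; simp [hab, smul_tmul']⟩

variable {A : Type} [AddCommGroup A] [Module k A] (𝒜 : ℤ → Submodule k A)
  [DirectSum.Decomposition 𝒜]

theorem span_homogeneous_eq_top :
    Submodule.span k {a : A | SetLike.IsHomogeneousElem 𝒜 a} = ⊤ := by
  refine Submodule.eq_top_iff'.mpr fun a => ?_
  induction a using DirectSum.Decomposition.inductionOn 𝒜 with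
  | zero => exact Submodule.zero_mem _
  | homogeneous m => exact Submodule.subset_span ⟨_, m.2⟩
  | add a b ha hb => exact Submodule.add_mem _ ha hb

theorem span_homogeneous_tmul_eq_top : Submodule.span k
    (Set.image2 (· ⊗ₜ[k] ·) {a : A | SetLike.IsHomogeneousElem 𝒜 a}
      {a : A | SetLike.IsHomogeneousElem 𝒜 a}) = ⊤ :=
  span_image2_tmul_eq_top (span_homogeneous_eq_top 𝒜) (span_homogeneous_eq_top 𝒜)

theorem ext_homogeneous {f g : A →ₗ[k] V} (h : ∀ ⦃i : ℤ⦄ ⦃a : A⦄, a ∈ 𝒜 i → f a = g a) :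
    f = g :=
  LinearMap.ext_on (span_homogeneous_eq_top 𝒜) fun _ ⟨_, ha⟩ => h ha

theorem ext_homogeneous₂ {f g : A ⊗[k] A →ₗ[k] V}
    (h : ∀ ⦃i j : ℤ⦄ ⦃a b : A⦄, a ∈ 𝒜 i → b ∈ 𝒜 j → f (a ⊗ₜ b) = g (a ⊗ₜ b)) : f = g :=
  ext_on_tmul (span_homogeneous_eq_top 𝒜) (span_homogeneous_eq_top 𝒜)
    fun _ ⟨_, ha⟩ _ ⟨_, hb⟩ => h ha hb

theorem ext_homogeneous₄ {f g : (A ⊗[k] A) ⊗[k] (A ⊗[k] A) →ₗ[k] V}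
    (h : ∀ ⦃i j p q : ℤ⦄ ⦃a b c e : A⦄, a ∈ 𝒜 i → b ∈ 𝒜 j → c ∈ 𝒜 p → e ∈ 𝒜 q →
      f ((a ⊗ₜ b) ⊗ₜ (c ⊗ₜ e)) = g ((a ⊗ₜ b) ⊗ₜ (c ⊗ₜ e))) : f = g :=
  ext_on_tmul (span_homogeneous_tmul_eq_top 𝒜) (span_homogeneous_tmul_eq_top 𝒜)
    fun _ ⟨_, ⟨_, ha⟩, _, ⟨_, hb⟩, hab⟩ _ ⟨_, ⟨_, hc⟩, _, ⟨_, he⟩, hce⟩ => hab ▸ hce ▸ h ha hb hc he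

def oddProj : A →ₗ[k] A :=
  DirectSum.toModule k ℤ A (fun i => if Odd i then (𝒜 i).subtype else 0) ∘ₗ
    (DirectSum.decomposeLinearEquiv 𝒜).toLinearMap

theorem hasParity_oddProj {i : ℤ} {a : A} (ha : a ∈ 𝒜 i) : HasParity (oddProj 𝒜) i a := by
  simp only [HasParity, oddProj, LinearMap.comp_apply, LinearEquiv.coe_coe,
    DirectSum.decomposeLinearEquiv_apply, DirectSum.decompose_of_mem 𝒜 ha]
  rw [← DirectSum.lof_eq_of k, DirectSum.toModule_lof]
  split_ifs <;> rfl

end Graded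

section TensorCoalgebra

variable {A : Type} [AddCommGroup A] [Module k A] (𝒜 : ℤ → Submodule k A)
  [DirectSum.Decomposition 𝒜] (comul : A →ₗ[k] A ⊗[k] A) (counit : A →ₗ[k] k)

def tensorComul : A ⊗[k] A →ₗ[k] (A ⊗[k] A) ⊗[k] (A ⊗[k] A) :=
  koszulInterchange (oddProj 𝒜) (oddProj 𝒜) ∘ₗ map comul comul

def tensorCounit : A ⊗[k] A →ₗ[k] k := LinearMap.mul' k k ∘ₗ map counit counit

variable {𝒜 comul counit}

theorem hasParity_of_mem_tgrade {n : ℤ} {z : A ⊗[k] A} (hz : z ∈ tgrade 𝒜 𝒜 n) :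
    HasParity (tensorOddProj (oddProj 𝒜) (oddProj 𝒜)) n z := by
  suffices tgrade 𝒜 𝒜 n ≤ LinearMap.ker
      (tensorOddProj (oddProj 𝒜) (oddProj 𝒜) - if Odd n then LinearMap.id else 0) by
    have := this hz
    unfold HasParity
    split_ifs at this ⊢ <;> simpa [sub_eq_zero] using this
  refine iSup_le fun ij => Submodule.span_le.mpr ?_
  rintro _ ⟨a, ha, b, hb, rfl⟩
  have hab := (hasParity_oddProj 𝒜 ha).tmul (hasParity_oddProj 𝒜 hb)
  rw [ij.2, HasParity] at hab
  simp only [SetLike.mem_coe, LinearMap.mem_ker, LinearMap.sub_apply, hab]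
  split_ifs <;> simp

theorem comul_comp_oddProj (hC : IsGradedCoalgebra k A 𝒜 comul counit) :
    comul ∘ₗ oddProj 𝒜 = tensorOddProj (oddProj 𝒜) (oddProj 𝒜) ∘ₗ comul := by
  refine ext_homogeneous 𝒜 fun i a ha => ?_
  have h₁ := hasParity_oddProj 𝒜 ha
  have h₂ := hasParity_of_mem_tgrade (hC.comul_mem ha)
  unfold HasParity at h₁ h₂
  simp only [LinearMap.comp_apply, h₁, h₂]
  split_ifs <;> simp

theorem counit_comp_oddProj (hC : IsGradedCoalgebra k A 𝒜 comul counit) :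
    counit ∘ₗ oddProj 𝒜 = 0 := by
  refine ext_homogeneous 𝒜 fun i a ha => ?_
  have h₁ := hasParity_oddProj 𝒜 ha
  unfold HasParity at h₁
  simp only [LinearMap.comp_apply, h₁, LinearMap.zero_apply]
  split_ifs with hi
  · exact hC.counit_zero ha (by rintro rfl; exact Int.not_odd_zero hi)
  · exact map_zero counit

theorem tensorCounit_comul_left (hC : IsGradedCoalgebra k A 𝒜 comul counit) (z : A ⊗[k] A) :
    TensorProduct.lid k (A ⊗[k] A) (map (tensorCounit counit) LinearMap.id
      (tensorComul 𝒜 comul z)) = z := by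
  have hπ (a : A) : counit (oddProj 𝒜 a) = 0 := LinearMap.congr_fun (counit_comp_oddProj hC) a
  have key : (TensorProduct.lid k (A ⊗[k] A)).toLinearMap ∘ₗ map (tensorCounit counit)
        LinearMap.id ∘ₗ koszulInterchange (oddProj 𝒜) (oddProj 𝒜) =
      map ((TensorProduct.lid k A).toLinearMap ∘ₗ map counit LinearMap.id)
        ((TensorProduct.lid k A).toLinearMap ∘ₗ map counit LinearMap.id) := by
    refine ext_fourfold' fun x y u v => ?_
    simp [koszulInterchange_tmul, tensorCounit, hπ, smul_tmul', mul_smul, smul_comm (counit x)]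
  have hε : (TensorProduct.lid k A).toLinearMap ∘ₗ map counit LinearMap.id ∘ₗ comul =
      LinearMap.id := LinearMap.ext hC.counit_comul_left
  calc TensorProduct.lid k (A ⊗[k] A) (map (tensorCounit counit) LinearMap.id
        (tensorComul 𝒜 comul z))
      = map ((TensorProduct.lid k A).toLinearMap ∘ₗ map counit LinearMap.id)
          ((TensorProduct.lid k A).toLinearMap ∘ₗ map counit LinearMap.id) (map comul comul z) :=
        LinearMap.congr_fun key _
    _ = z := by rw [map_map, LinearMap.comp_assoc, hε, map_id, LinearMap.id_apply]

theorem tensorCounit_comul_right (hC : IsGradedCoalgebra k A 𝒜 comul counit) (z : A ⊗[k] A) :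
    TensorProduct.rid k (A ⊗[k] A) (map LinearMap.id (tensorCounit counit)
      (tensorComul 𝒜 comul z)) = z := by
  have hπ (a : A) : counit (oddProj 𝒜 a) = 0 := LinearMap.congr_fun (counit_comp_oddProj hC) a
  have key : (TensorProduct.rid k (A ⊗[k] A)).toLinearMap ∘ₗ map LinearMap.id
        (tensorCounit counit) ∘ₗ koszulInterchange (oddProj 𝒜) (oddProj 𝒜) =
      map ((TensorProduct.rid k A).toLinearMap ∘ₗ map LinearMap.id counit)
        ((TensorProduct.rid k A).toLinearMap ∘ₗ map LinearMap.id counit) := by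
    refine ext_fourfold' fun x y u v => ?_
    simp [koszulInterchange_tmul, tensorCounit, hπ, smul_tmul', mul_smul, smul_comm (counit y)]
  have hε : (TensorProduct.rid k A).toLinearMap ∘ₗ map LinearMap.id counit ∘ₗ comul =
      LinearMap.id := LinearMap.ext hC.counit_comul_right
  calc TensorProduct.rid k (A ⊗[k] A) (map LinearMap.id (tensorCounit counit)
        (tensorComul 𝒜 comul z))
      = map ((TensorProduct.rid k A).toLinearMap ∘ₗ map LinearMap.id counit)
          ((TensorProduct.rid k A).toLinearMap ∘ₗ map LinearMap.id counit) (map comul comul z) :=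
        LinearMap.congr_fun key _
    _ = z := by rw [map_map, LinearMap.comp_assoc, hε, map_id, LinearMap.id_apply]

/-- Both sides send `((x ⊗ y) ⊗ z) ⊗ ((u ⊗ v) ⊗ w)` to
`(-1)^{|y||u| + |z||u| + |z||v|} (x ⊗ u) ⊗ ((y ⊗ v) ⊗ (z ⊗ w))`. -/
theorem koszulInterchange_assoc :
    (TensorProduct.assoc k (A ⊗[k] A) (A ⊗[k] A) (A ⊗[k] A)).toLinearMap ∘ₗ
        map (koszulInterchange (oddProj 𝒜) (oddProj 𝒜)) LinearMap.id ∘ₗ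
        koszulInterchange (M := A ⊗[k] A) (Q := A) (oddProj 𝒜)
          (tensorOddProj (oddProj 𝒜) (oddProj 𝒜)) =
      map LinearMap.id (koszulInterchange (oddProj 𝒜) (oddProj 𝒜)) ∘ₗ
        koszulInterchange (M := A) (Q := A ⊗[k] A)
          (tensorOddProj (oddProj 𝒜) (oddProj 𝒜)) (oddProj 𝒜) ∘ₗ
        map (TensorProduct.assoc k A A A).toLinearMap
          (TensorProduct.assoc k A A A).toLinearMap := by
  have hspan := span_image2_tmul_eq_top (span_homogeneous_tmul_eq_top 𝒜)
    (span_homogeneous_eq_top 𝒜)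
  refine ext_on_tmul hspan hspan ?_
  rintro _ ⟨_, ⟨x, -, y, ⟨b, hy⟩, rfl⟩, z, ⟨c, hz⟩, rfl⟩
    _ ⟨_, ⟨u, ⟨d, hu⟩, v, ⟨e, hv⟩, rfl⟩, w, -, rfl⟩
  have hy' := hasParity_oddProj 𝒜 hy
  have hz' := hasParity_oddProj 𝒜 hz
  have hu' := hasParity_oddProj 𝒜 hu
  have hv' := hasParity_oddProj 𝒜 hv
  simp only [LinearMap.comp_apply, LinearEquiv.coe_coe, map_tmul, LinearMap.id_apply,
    TensorProduct.assoc_tmul, koszulInterchange_tmul_of_parity _ _ hz' (hu'.tmul hv'),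
    koszulInterchange_tmul_of_parity _ _ (hy'.tmul hz') hu',
    koszulInterchange_tmul_of_parity _ _ hy' hu', koszulInterchange_tmul_of_parity _ _ hz' hv',
    map_smul, ← smul_tmul', tmul_smul, smul_smul, neg_one_zpow_mul_neg_one_zpow]
  congr 2
  ring

theorem tensorComul_coassoc (hC : IsGradedCoalgebra k A 𝒜 comul counit) (z : A ⊗[k] A) :
    TensorProduct.assoc k _ _ _ (map (tensorComul 𝒜 comul) LinearMap.id (tensorComul 𝒜 comul z)) =
      map LinearMap.id (tensorComul 𝒜 comul) (tensorComul 𝒜 comul z) := by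
  have hΔ := comul_comp_oddProj hC
  have hid : LinearMap.id ∘ₗ oddProj 𝒜 = oddProj 𝒜 ∘ₗ LinearMap.id := rfl
  have natL := koszulInterchange_comp_map (Q := A) (Q' := A) comul LinearMap.id hid hΔ
  have natR := koszulInterchange_comp_map (M := A) (M' := A) LinearMap.id comul hΔ hid
  have hco : map comul LinearMap.id ∘ₗ comul = (TensorProduct.assoc k A A A).symm.toLinearMap ∘ₗ
      map LinearMap.id comul ∘ₗ comul := by
    ext a
    simp [← hC.coassoc a]
  set φ := koszulInterchange (M := A) (Q := A) (oddProj 𝒜) (oddProj 𝒜)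
  set w := map comul comul z
  calc TensorProduct.assoc k _ _ _ (map (tensorComul 𝒜 comul) LinearMap.id (tensorComul 𝒜 comul z))
      = TensorProduct.assoc k _ _ _ (map φ LinearMap.id
          (map (map comul comul) (map LinearMap.id LinearMap.id) (φ w))) := by
        simp [tensorComul, φ, w, map_map]
    _ = TensorProduct.assoc k _ _ _ (map φ LinearMap.id (koszulInterchange (oddProj 𝒜)
          (tensorOddProj (oddProj 𝒜) (oddProj 𝒜))
          (map (TensorProduct.assoc k A A A).symm.toLinearMap
            (TensorProduct.assoc k A A A).symm.toLinearMap
            (map (map LinearMap.id comul ∘ₗ comul) (map LinearMap.id comul ∘ₗ comul) z)))) := by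
        rw [← LinearMap.comp_apply (map (map comul comul) _), ← natL]
        simp [w, map_map, hco]
    _ = map LinearMap.id φ (koszulInterchange (tensorOddProj (oddProj 𝒜) (oddProj 𝒜)) (oddProj 𝒜)
          (map (map LinearMap.id comul ∘ₗ comul) (map LinearMap.id comul ∘ₗ comul) z)) := by
        have := LinearMap.congr_fun (koszulInterchange_assoc (𝒜 := 𝒜))
          (map (TensorProduct.assoc k A A A).symm.toLinearMap
            (TensorProduct.assoc k A A A).symm.toLinearMap
            (map (map LinearMap.id comul ∘ₗ comul) (map LinearMap.id comul ∘ₗ comul) z))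
        simpa [map_map] using this
    _ = map LinearMap.id (tensorComul 𝒜 comul) (tensorComul 𝒜 comul z) := by
        rw [← map_map, ← LinearMap.comp_apply (koszulInterchange _ _), natR]
        simp [tensorComul, φ, map_map]

theorem conv_tmul_eq_sum {B : Type} [AddCommGroup B] [Module k B] (μ : B →ₗ[k] B →ₗ[k] B)
    (f g : A ⊗[k] A →ₗ[k] B) {a b : A} {m m' : ℕ} {p : Fin m → ℤ} {x y : Fin m → A}
    {q : Fin m' → ℤ} {u v : Fin m' → A} (hy : ∀ s, y s ∈ 𝒜 (p s)) (hu : ∀ t, u t ∈ 𝒜 (q t))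
    (ha : comul a = ∑ s, x s ⊗ₜ y s) (hb : comul b = ∑ t, u t ⊗ₜ v t) :
    conv μ (tensorComul 𝒜 comul) f g (a ⊗ₜ b) =
      ∑ s, ∑ t, ((-1 : k) ^ (p s * q t)) • μ (f (x s ⊗ₜ u t)) (g (y s ⊗ₜ v t)) := by
  simp [conv, tensorComul, ha, hb, sum_tmul, tmul_sum,
    koszulInterchange_tmul_of_parity _ _ (hasParity_oddProj 𝒜 (hy _)) (hasParity_oddProj 𝒜 (hu _))]
  exact Finset.sum_comm

end TensorCoalgebra

section Bialgebra

variable {A V : Type} [AddCommGroup A] [Module k A] [AddCommGroup V] [Module k V]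
  {𝒜 : ℤ → Submodule k A} {mul : A →ₗ[k] A →ₗ[k] A} {one : A}
  {comul : A →ₗ[k] A ⊗[k] A} {counit : A →ₗ[k] k}

theorem counit_comp_lift_mul (hB : IsGradedBialgebra k A 𝒜 mul one comul counit) :
    counit ∘ₗ lift mul = tensorCounit counit :=
  TensorProduct.ext' fun a b => by simp [tensorCounit, hB.counit_mul]

variable [DirectSum.Decomposition 𝒜]

theorem lift_eq_comp_koszulInterchange {F : A ⊗[k] A →ₗ[k] A ⊗[k] A →ₗ[k] V}
    {G : (A ⊗[k] A) ⊗[k] (A ⊗[k] A) →ₗ[k] V}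
    (h : ∀ ⦃j p : ℤ⦄ (a : A) ⦃b c : A⦄ (e : A), b ∈ 𝒜 j → c ∈ 𝒜 p →
      F (a ⊗ₜ b) (c ⊗ₜ e) = ((-1 : k) ^ (j * p)) • G ((a ⊗ₜ c) ⊗ₜ (b ⊗ₜ e))) :
    lift F = G ∘ₗ koszulInterchange (oddProj 𝒜) (oddProj 𝒜) :=
  ext_homogeneous₄ 𝒜 fun _ _ _ _ a _ _ e _ hb hc _ => by
    simp [koszulInterchange_tmul_of_parity _ _ (hasParity_oddProj 𝒜 hb)
      (hasParity_oddProj 𝒜 hc), h a e hb hc]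

theorem comul_comp_lift_mul (hB : IsGradedBialgebra k A 𝒜 mul one comul counit) :
    comul ∘ₗ lift mul = map (lift mul) (lift mul) ∘ₗ tensorComul 𝒜 comul := by
  obtain ⟨mul₂, hchar, hmul⟩ := hB.comul_mul
  have hlift : lift mul₂ = map (lift mul) (lift mul) ∘ₗ
      koszulInterchange (oddProj 𝒜) (oddProj 𝒜) :=
    lift_eq_comp_koszulInterchange fun j p a b c e hb hc => by
      simp [hchar a e hc hb, mul_comm p j]
  refine TensorProduct.ext' fun a b => ?_
  rw [LinearMap.comp_apply, lift.tmul, hmul, tensorComul, LinearMap.comp_apply,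
    LinearMap.comp_apply, map_tmul, ← LinearMap.comp_apply (map _ _), ← hlift, lift.tmul]

end Bialgebra

section Hopf

variable {A : Type} [AddCommGroup A] [Module k A]
  {𝒜 : ℤ → Submodule k A} [DirectSum.Decomposition 𝒜] {mul : A →ₗ[k] A →ₗ[k] A} {one : A}
  {comul : A →ₗ[k] A ⊗[k] A} {counit : A →ₗ[k] k} {S : A →ₗ[k] A}

theorem lift_mul_map_comp_koszulInterchange
    (hassoc : ∀ a b c : A, mul (mul a b) c = mul a (mul b c))
    (hcomm : ∀ ⦃i j : ℤ⦄ ⦃a b : A⦄, a ∈ 𝒜 i → b ∈ 𝒜 j → mul a b = ((-1 : k) ^ (i * j)) • mul b a)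
    (f g f' g' : A →ₗ[k] A) (hg : ∀ ⦃i : ℤ⦄ ⦃a : A⦄, a ∈ 𝒜 i → g a ∈ 𝒜 i)
    (hf' : ∀ ⦃i : ℤ⦄ ⦃a : A⦄, a ∈ 𝒜 i → f' a ∈ 𝒜 i) :
    lift mul ∘ₗ map (lift mul ∘ₗ map f g) (lift mul ∘ₗ map f' g') ∘ₗ
        koszulInterchange (oddProj 𝒜) (oddProj 𝒜) =
      lift mul ∘ₗ map (lift mul ∘ₗ map f f') (lift mul ∘ₗ map g g') :=
  ext_homogeneous₄ 𝒜 fun _ j p _ x y u v _ hy hu _ => by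
    simp only [LinearMap.comp_apply, koszulInterchange_tmul_of_parity _ _ (hasParity_oddProj 𝒜 hy)
      (hasParity_oddProj 𝒜 hu), map_smul, map_tmul, lift.tmul]
    rw [hassoc (f x) (g u), hassoc (f x) (f' y), ← hassoc (f' y) (g u), hcomm (hf' hy) (hg hu),
      LinearMap.map_smul₂, map_smul, hassoc (g u)]

variable (hH : IsGradedHopf k A 𝒜 mul one comul counit S)
include hH

theorem conv_antipode_comp_lift_mul :
    conv mul (tensorComul 𝒜 comul) (S ∘ₗ lift mul) (lift mul) =
      LinearMap.toSpanSingleton k A one ∘ₗ tensorCounit counit := by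
  refine LinearMap.ext fun z => ?_
  have hΔ := LinearMap.congr_fun (comul_comp_lift_mul hH.bialg) z
  have hε := LinearMap.congr_fun (counit_comp_lift_mul hH.bialg) z
  simp only [LinearMap.comp_apply] at hΔ hε
  calc conv mul (tensorComul 𝒜 comul) (S ∘ₗ lift mul) (lift mul) z
      = lift mul (map S LinearMap.id (map (lift mul) (lift mul) (tensorComul 𝒜 comul z))) := by
        simp [conv, map_map]
    _ = _ := by simp [← hΔ, hH.antipode_left, hε]

theorem conv_lift_mul_antipode_comp_lift_mul :
    conv mul (tensorComul 𝒜 comul) (lift mul) (S ∘ₗ lift mul) =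
      LinearMap.toSpanSingleton k A one ∘ₗ tensorCounit counit := by
  refine LinearMap.ext fun z => ?_
  have hΔ := LinearMap.congr_fun (comul_comp_lift_mul hH.bialg) z
  have hε := LinearMap.congr_fun (counit_comp_lift_mul hH.bialg) z
  simp only [LinearMap.comp_apply] at hΔ hε
  calc conv mul (tensorComul 𝒜 comul) (lift mul) (S ∘ₗ lift mul) z
      = lift mul (map LinearMap.id S (map (lift mul) (lift mul) (tensorComul 𝒜 comul z))) := by
        simp [conv, map_map]
    _ = _ := by simp [← hΔ, hH.antipode_right, hε]

variable (hcomm : ∀ ⦃i j : ℤ⦄ ⦃a b : A⦄, a ∈ 𝒜 i → b ∈ 𝒜 j →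
  mul a b = ((-1 : k) ^ (i * j)) • mul b a)
include hcomm

theorem conv_lift_mul_map_antipode :
    conv mul (tensorComul 𝒜 comul) (lift mul ∘ₗ map S S) (lift mul) =
      LinearMap.toSpanSingleton k A one ∘ₗ tensorCounit counit := by
  have key := lift_mul_map_comp_koszulInterchange hH.bialg.alg.mul_assoc hcomm S S LinearMap.id
    LinearMap.id hH.antipode_mem fun _ _ ha => ha
  rw [map_id, LinearMap.comp_id] at key
  refine TensorProduct.ext' fun a b => ?_
  have := LinearMap.congr_fun key (comul a ⊗ₜ comul b)
  simp only [LinearMap.comp_apply, map_tmul, lift.tmul] at this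
  simp [conv, tensorComul, this, hH.antipode_left, hH.bialg.alg.one_mul, tensorCounit, mul_smul,
    smul_comm (counit a)]

theorem antipode_comp_lift_mul : S ∘ₗ lift mul = lift mul ∘ₗ map S S := by
  have hassoc := conv_assoc mul (tensorComul 𝒜 comul) hH.bialg.alg.mul_assoc
    (tensorComul_coassoc hH.bialg.coalg)
  calc S ∘ₗ lift mul
      = conv mul (tensorComul 𝒜 comul) (LinearMap.toSpanSingleton k A one ∘ₗ
          tensorCounit counit) (S ∘ₗ lift mul) :=
        (one_conv _ _ hH.bialg.alg.one_mul (tensorCounit_comul_left hH.bialg.coalg) _).symm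
    _ = conv mul (tensorComul 𝒜 comul) (lift mul ∘ₗ map S S)
          (conv mul (tensorComul 𝒜 comul) (lift mul) (S ∘ₗ lift mul)) := by
        rw [← hassoc, conv_lift_mul_map_antipode hH hcomm]
    _ = lift mul ∘ₗ map S S := by
        rw [conv_lift_mul_antipode_comp_lift_mul hH]
        exact conv_one _ _ hH.bialg.alg.mul_one (tensorCounit_comul_right hH.bialg.coalg) _

end Hopf

section Poisson

variable {A : Type} [AddCommGroup A] [Module k A] {𝒜 : ℤ → Submodule k A}
  {mul bracket : A →ₗ[k] A →ₗ[k] A} {one : A} {d : A →ₗ[k] A}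

theorem bracket_one_right {p : ℤ} (hP : IsDGPoisson k A 𝒜 mul one bracket d p) {i : ℤ} {c : A}
    (hc : c ∈ 𝒜 i) : bracket c one = 0 := by
  have h := hP.bracket_leibniz one hc hP.one_mem
  rw [hP.mul_one, hP.mul_one, hP.one_mul, mul_zero, zpow_zero, one_smul] at h
  exact left_eq_add.mp h

theorem bracket_one_left {p : ℤ} (hP : IsDGPoisson k A 𝒜 mul one bracket d p) {i : ℤ} {c : A}
    (hc : c ∈ 𝒜 i) : bracket one c = 0 := by
  rw [hP.bracket_antisymm hP.one_mem hc, bracket_one_right hP hc, smul_zero, neg_zero]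

theorem bracket_mul_left (hP : IsDGPoisson k A 𝒜 mul one bracket d 0) {i j l : ℤ} {f g c : A}
    (hf : f ∈ 𝒜 i) (hg : g ∈ 𝒜 j) (hc : c ∈ 𝒜 l) :
    bracket (mul f g) c = ((-1 : k) ^ (j * l)) • mul (bracket f c) g + mul f (bracket g c) := by
  have anti : ∀ ⦃i j : ℤ⦄ ⦃a b : A⦄, a ∈ 𝒜 i → b ∈ 𝒜 j →
      bracket a b = -(((-1 : k) ^ (i * j)) • bracket b a) := fun i j a b ha hb => by
    simpa using hP.bracket_antisymm ha hb
  have leib := hP.bracket_leibniz g hc hf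
  rw [add_zero] at leib
  rw [anti (hP.mul_mem hf hg) hc, leib, anti hc hf, anti hc hg]
  simp only [map_neg, LinearMap.neg_apply, map_smul, LinearMap.smul_apply, smul_add, smul_neg,
    smul_smul, neg_neg, neg_add_rev, neg_one_zpow_mul_neg_one_zpow]
  rw [add_comm,
    neg_one_zpow_eq_of_even_sub (m := (i + j) * l + l * i) (n := j * l) ⟨i * l, by ring⟩,
    neg_one_zpow_eq_of_even_sub (m := (i + j) * l + (l * i + l * j)) (n := 0)
      ⟨i * l + j * l, by ring⟩, zpow_zero, one_smul]

end Poisson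

section PoissonHopf

variable {A : Type} [AddCommGroup A] [Module k A] {𝒜 : ℤ → Submodule k A}
  {mul bracket : A →ₗ[k] A →ₗ[k] A} {one : A} {d : A →ₗ[k] A}
  {comul : A →ₗ[k] A ⊗[k] A} {counit : A →ₗ[k] k} {S : A →ₗ[k] A}

section PoissonBialgebra

variable [DirectSum.Decomposition 𝒜]
  (hPB : IsDGPoissonBialgebra k A 𝒜 mul one bracket d comul counit)
include hPB

theorem comul_comp_lift_bracket :
    comul ∘ₗ lift bracket = (map (lift bracket) (lift mul) + map (lift mul) (lift bracket)) ∘ₗ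
      tensorComul 𝒜 comul := by
  obtain ⟨br₂, hchar, hbr⟩ := hPB.comul_bracket
  have hlift : lift br₂ = (map (lift bracket) (lift mul) + map (lift mul) (lift bracket)) ∘ₗ
      koszulInterchange (oddProj 𝒜) (oddProj 𝒜) :=
    lift_eq_comp_koszulInterchange fun j p a b c e hb hc => by
      simp [hchar a e hc hb, mul_comm p j, smul_add]
  refine TensorProduct.ext' fun a b => ?_
  rw [LinearMap.comp_apply, lift.tmul, hbr, tensorComul, LinearMap.comp_apply,
    LinearMap.comp_apply, map_tmul, ← LinearMap.comp_apply (_ + _), ← hlift, lift.tmul]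

/-- In `Hom(A ⊗ A, k)` the map `ε ∘ β` equals `(ε ∘ β) ⋆ (ε ∘ m) + (ε ∘ m) ⋆ (ε ∘ β)`, and `ε ∘ m`
is the unit. -/
theorem counit_comp_lift_bracket : counit ∘ₗ lift bracket = 0 := by
  have hB := hPB.dgbialg.bialg
  have hε : LinearMap.mul' k k ∘ₗ map counit counit ∘ₗ comul = counit := by
    have h : counit ∘ₗ (TensorProduct.lid k A).toLinearMap ∘ₗ map counit LinearMap.id =
        LinearMap.mul' k k ∘ₗ map counit counit :=
      TensorProduct.ext' fun x y => by simp
    refine LinearMap.ext fun a => ?_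
    conv_rhs => rw [← hB.coalg.counit_comul_left a]
    exact (LinearMap.congr_fun h (comul a)).symm
  have hunit : LinearMap.toSpanSingleton k k 1 ∘ₗ tensorCounit counit = counit ∘ₗ lift mul := by
    rw [counit_comp_lift_mul hB]
    ext
    simp
  have key : counit ∘ₗ lift bracket =
      conv (LinearMap.mul k k) (tensorComul 𝒜 comul) (counit ∘ₗ lift bracket)
          (counit ∘ₗ lift mul) +
        conv (LinearMap.mul k k) (tensorComul 𝒜 comul) (counit ∘ₗ lift mul)
          (counit ∘ₗ lift bracket) := by
    rw [conv_add_conv]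
    conv_lhs => rw [← hε]
    refine LinearMap.ext fun z => ?_
    have hΔ := LinearMap.congr_fun (comul_comp_lift_bracket hPB) z
    simp only [LinearMap.comp_apply] at hΔ ⊢
    rw [hΔ]
    simp [map_map, LinearMap.mul']
  rw [← hunit, conv_one _ _ (fun _ => mul_one _) (tensorCounit_comul_right hB.coalg),
    one_conv _ _ (fun _ => one_mul _) (tensorCounit_comul_left hB.coalg)] at key
  exact left_eq_add.mp key

end PoissonBialgebra

theorem IsDGPoissonHopf.toIsGradedHopf
    (hA : IsDGPoissonHopf k A 𝒜 mul one bracket d comul counit S) :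
    IsGradedHopf k A 𝒜 mul one comul counit S :=
  ⟨hA.toPoissonBialg.dgbialg.bialg, hA.antipode_mem, hA.antipode_left, hA.antipode_right⟩

variable (hA : IsDGPoissonHopf k A 𝒜 mul one bracket d comul counit S)
include hA

theorem sum_mul_antipode_bracket_right {z c : A} {γ : ℤ} {m : ℕ} {p p' : Fin m → ℤ}
    {x y : Fin m → A} (hx : ∀ s, x s ∈ 𝒜 (p s)) (hy : ∀ s, y s ∈ 𝒜 (p' s))
    (hz : comul z = ∑ s, x s ⊗ₜ y s) (hc : c ∈ 𝒜 γ) :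
    ∑ s, ((-1 : k) ^ (p' s * γ)) • mul (bracket (x s) c) (S (y s)) =
      -∑ s, mul (x s) (bracket (S (y s)) c) := by
  have hP := hA.toPoissonBialg.poisson
  have h0 : ∑ s, mul (x s) (S (y s)) = counit z • one := by
    simpa [hz] using hA.antipode_right z
  have h1 := congr(bracket $h0 c)
  rw [map_smul, LinearMap.smul_apply, bracket_one_left hP hc, smul_zero, map_sum,
    LinearMap.sum_apply] at h1
  simp only [bracket_mul_left hP (hx _) (hA.antipode_mem (hy _)) hc, Finset.sum_add_distrib] at h1
  exact eq_neg_of_add_eq_zero_left h1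

theorem sum_mul_antipode_bracket_left {b c : A} {γ : ℤ} {m : ℕ} {q : Fin m → ℤ}
    {u v : Fin m → A} (hu : ∀ t, u t ∈ 𝒜 (q t)) (hb : comul b = ∑ t, u t ⊗ₜ v t) (hc : c ∈ 𝒜 γ) :
    ∑ t, mul (bracket c (u t)) (S (v t)) =
      -∑ t, ((-1 : k) ^ (γ * q t)) • mul (u t) (bracket c (S (v t))) := by
  have hP := hA.toPoissonBialg.poisson
  have h0 : ∑ t, mul (u t) (S (v t)) = counit b • one := by
    simpa [hb] using hA.antipode_right b
  have h1 := congr(bracket c $h0)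
  rw [map_smul, bracket_one_right hP hc, smul_zero, map_sum] at h1
  simp only [hP.bracket_leibniz _ hc (hu _), add_zero, Finset.sum_add_distrib] at h1
  exact eq_neg_of_add_eq_zero_left h1

variable [DirectSum.Decomposition 𝒜]

theorem conv_lift_bracket_antipode_comp_lift_mul :
    conv mul (tensorComul 𝒜 comul) (lift bracket) (S ∘ₗ lift mul) =
      conv mul (tensorComul 𝒜 comul) (lift mul) (lift bracket ∘ₗ map S S) := by
  have hassoc := hA.toPoissonBialg.poisson.mul_assoc
  have hS_mul := antipode_comp_lift_mul hA.toIsGradedHopf hA.toPoissonBialg.poisson.gcomm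
  refine ext_homogeneous₂ 𝒜 fun i j a b ha hb => ?_
  obtain ⟨m, p, x, y, hx, hy, hrepa⟩ := exists_sum_tmul_of_mem_tgrade
    (hA.toPoissonBialg.dgbialg.bialg.coalg.comul_mem ha)
  obtain ⟨m', q, u, v, hu, hv, hrepb⟩ := exists_sum_tmul_of_mem_tgrade
    (hA.toPoissonBialg.dgbialg.bialg.coalg.comul_mem hb)
  rw [conv_tmul_eq_sum _ _ _ hy hu hrepa hrepb, conv_tmul_eq_sum _ _ _ hy hu hrepa hrepb]
  have hSm (a b : A) : S (mul a b) = mul (S a) (S b) := by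
    simpa using LinearMap.congr_fun hS_mul (a ⊗ₜ b)
  simp only [LinearMap.comp_apply, lift.tmul, map_tmul]
  calc ∑ s, ∑ t, ((-1 : k) ^ ((i - p s) * q t)) • mul (bracket (x s) (u t)) (S (mul (y s) (v t)))
      = ∑ t, mul (∑ s, ((-1 : k) ^ ((i - p s) * q t)) • mul (bracket (x s) (u t)) (S (y s)))
          (S (v t)) := by
        rw [Finset.sum_comm]
        simp only [hSm, ← hassoc, map_sum, LinearMap.sum_apply, map_smul, LinearMap.smul_apply]
    _ = -∑ s, mul (x s) (∑ t, mul (bracket (S (y s)) (u t)) (S (v t))) := by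
        simp only [sum_mul_antipode_bracket_right hA hx hy hrepa (hu _), map_neg,
          LinearMap.neg_apply, map_sum, LinearMap.sum_apply, hassoc, Finset.sum_neg_distrib]
        rw [Finset.sum_comm]
    _ = ∑ s, ∑ t, ((-1 : k) ^ ((i - p s) * q t)) •
          mul (mul (x s) (u t)) (bracket (S (y s)) (S (v t))) := by
        simp only [sum_mul_antipode_bracket_left hA hu hrepb (hA.antipode_mem (hy _)), map_neg,
          neg_neg, map_sum, map_smul, hassoc, Finset.sum_neg_distrib]

theorem conv_lift_mul_antipode_comp_lift_bracket :
    conv mul (tensorComul 𝒜 comul) (lift mul) (S ∘ₗ lift bracket) =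
      -conv mul (tensorComul 𝒜 comul) (lift bracket) (S ∘ₗ lift mul) := by
  refine eq_neg_of_add_eq_zero_left ?_
  rw [conv_add_conv]
  refine LinearMap.ext fun z => ?_
  have hΔ := LinearMap.congr_fun (comul_comp_lift_bracket hA.toPoissonBialg) z
  have hε := LinearMap.congr_fun (counit_comp_lift_bracket hA.toPoissonBialg) z
  simp only [LinearMap.comp_apply, LinearMap.zero_apply] at hΔ hε
  calc (lift mul ∘ₗ (map (lift mul) (S ∘ₗ lift bracket) + map (lift bracket) (S ∘ₗ lift mul)) ∘ₗ
        tensorComul 𝒜 comul) z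
      = lift mul (map LinearMap.id S ((map (lift bracket) (lift mul) +
          map (lift mul) (lift bracket)) (tensorComul 𝒜 comul z))) := by
        simp [map_map, add_comm]
    _ = 0 := by rw [← hΔ, hA.antipode_right, hε, zero_smul]

theorem antipode_comp_lift_bracket : S ∘ₗ lift bracket = -(lift bracket ∘ₗ map S S) := by
  have hH := hA.toIsGradedHopf
  have hassoc := conv_assoc mul (tensorComul 𝒜 comul) hH.bialg.alg.mul_assoc
    (tensorComul_coassoc hH.bialg.coalg)
  have hunit := one_conv mul (tensorComul 𝒜 comul) hH.bialg.alg.one_mul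
    (tensorCounit_comul_left hH.bialg.coalg)
  calc S ∘ₗ lift bracket
      = conv mul (tensorComul 𝒜 comul) (LinearMap.toSpanSingleton k A one ∘ₗ
          tensorCounit counit) (S ∘ₗ lift bracket) := (hunit _).symm
    _ = conv mul (tensorComul 𝒜 comul) (S ∘ₗ lift mul)
          (conv mul (tensorComul 𝒜 comul) (lift mul) (S ∘ₗ lift bracket)) := by
        rw [← hassoc, conv_antipode_comp_lift_mul hH]
    _ = -conv mul (tensorComul 𝒜 comul) (S ∘ₗ lift mul)
          (conv mul (tensorComul 𝒜 comul) (lift mul) (lift bracket ∘ₗ map S S)) := by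
        rw [conv_lift_mul_antipode_comp_lift_bracket hA,
          conv_lift_bracket_antipode_comp_lift_mul hA, conv_neg_right]
    _ = -(lift bracket ∘ₗ map S S) := by
        rw [← hassoc, conv_antipode_comp_lift_mul hH, hunit]

end PoissonHopf

/-- The antipode of a DG Poisson Hopf algebra (bracket of degree 0) is a
graded Poisson anti-homomorphism: `S({a,b}) = (-1)^{|a||b|}{S(b), S(a)} = -{S(a), S(b)}`. -/
theorem antipode_poisson_anti_hom {k : Type} [Field k]
    (A : Type) [AddCommGroup A] [Module k A]
    (𝒜 : ℤ → Submodule k A) (mul : A →ₗ[k] A →ₗ[k] A) (one : A)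
    (bracket : A →ₗ[k] A →ₗ[k] A) (d : A →ₗ[k] A)
    (comul : A →ₗ[k] A ⊗[k] A) (counit : A →ₗ[k] k) (S : A →ₗ[k] A)
    (hA : IsDGPoissonHopf k A 𝒜 mul one bracket d comul counit S) :
    ∀ ⦃i j : ℤ⦄ ⦃a b : A⦄, a ∈ 𝒜 i → b ∈ 𝒜 j →
      S (bracket a b) = ((-1 : k) ^ (i * j)) • bracket (S b) (S a) ∧
      S (bracket a b) = -(bracket (S a) (S b)) := by
  have hG := hA.toPoissonBialg.poisson.toIsGradedAlgebra
  let _ := (DirectSum.isInternal_submodule_of_iSupIndep_of_iSup_eq_top hG.indep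
    hG.total).chooseDecomposition
  intro i j a b ha hb
  have h := LinearMap.congr_fun (antipode_comp_lift_bracket hA) (a ⊗ₜ b)
  simp only [LinearMap.comp_apply, lift.tmul, LinearMap.neg_apply, map_tmul] at h
  refine ⟨?_, h⟩
  rw [h, hA.toPoissonBialg.poisson.bracket_antisymm (hA.antipode_mem ha) (hA.antipode_mem hb)]
  simp

end DGPH
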